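/- Let E₀, E₁, D₀, D₁ : [0,∞) → [0,∞) be C¹ functions and c > 0 a constant such that E₀' + D₀ ≤ 0, E₁' + D₁ ≤ 0, and E₀ ≤ c·D₁ pointwise on [0,∞). Then there exists a constant C (depending only on c) such that for all t ≥ 0: (1+t)·E₀(t) + ∫₀ᵗ (1+τ)·D₀(τ) dτ ≤ C·(E₀(0) + E₁(0)). -/

import Mathlib

/-!
The Lyapunov functional `F(s) = (1 + s) E₀(s) + c E₁(s)` satisfies
`F' + (1 + s) D₀ = (1 + s)(E₀' + D₀) + (E₀ + c E₁') ≤ E₀ - c D₁ ≤ 0`, so integrating gives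
`(1 + t) E₀(t) + ∫₀ᵗ (1 + τ) D₀ ≤ F(0) - c E₁(t) ≤ E₀(0) + c E₁(0)`.
-/

open intervalIntegral

theorem add_integral_le_of_deriv_add_le_zero {E D : ℝ → ℝ} {a b : ℝ} (hab : a ≤ b)
    (hE : ContDiff ℝ 1 E) (hD : Continuous D) (h : ∀ x ∈ Set.Icc a b, deriv E x + D x ≤ 0) :
    E b + ∫ x in a..b, D x ≤ E a := by
  have hE' : Continuous (deriv E) := hE.continuous_deriv le_rfl
  have hftc : ∫ x in a..b, deriv E x = E b - E a :=
    integral_deriv_eq_sub (fun x _ => (hE.differentiable one_ne_zero).differentiableAt)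
      (hE'.intervalIntegrable a b)
  have hnonneg : 0 ≤ ∫ x in a..b, -(deriv E x + D x) :=
    integral_nonneg hab fun x hx => neg_nonneg.mpr (h x hx)
  rw [integral_neg, integral_add (hE'.intervalIntegrable a b) (hD.intervalIntegrable a b),
    hftc] at hnonneg
  linarith

/-- Abstract two-layer energy lemma: if `E₀' + D₀ ≤ 0`, `E₁' + D₁ ≤ 0` and
`E₀ ≤ c D₁` on `[0,∞)`, then `(1+t)E₀(t) + ∫₀ᵗ (1+τ)D₀ dτ ≤ C (E₀(0) + E₁(0))`. -/
theorem two_layer_energy_decay (c : ℝ) (hc : 0 < c) :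
    ∃ C : ℝ, 0 < C ∧ ∀ E₀ E₁ D₀ D₁ : ℝ → ℝ,
      ContDiff ℝ 1 E₀ → ContDiff ℝ 1 E₁ → ContDiff ℝ 1 D₀ → ContDiff ℝ 1 D₁ →
      (∀ t, 0 ≤ t → 0 ≤ E₀ t) → (∀ t, 0 ≤ t → 0 ≤ E₁ t) →
      (∀ t, 0 ≤ t → 0 ≤ D₀ t) → (∀ t, 0 ≤ t → 0 ≤ D₁ t) →
      (∀ t, 0 ≤ t → deriv E₀ t + D₀ t ≤ 0) →
      (∀ t, 0 ≤ t → deriv E₁ t + D₁ t ≤ 0) →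
      (∀ t, 0 ≤ t → E₀ t ≤ c * D₁ t) →
      ∀ t, 0 ≤ t →
        (1 + t) * E₀ t + (∫ τ in (0:ℝ)..t, (1 + τ) * D₀ τ) ≤ C * (E₀ 0 + E₁ 0) := by
  refine ⟨1 + c, by linarith, ?_⟩
  intro E₀ E₁ D₀ D₁ hE₀ hE₁ hD₀ _ hE₀_nonneg hE₁_nonneg _ _ hlayer₀ hlayer₁ hE₀_le t ht
  set F : ℝ → ℝ := fun s => (1 + s) * E₀ s + c * E₁ s
  have hF_deriv : ∀ s, deriv F s = E₀ s + (1 + s) * deriv E₀ s + c * deriv E₁ s := fun s => by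
    have hE₀s := ((hE₀.differentiable one_ne_zero) s).hasDerivAt
    have hE₁s := ((hE₁.differentiable one_ne_zero) s).hasDerivAt
    have hFs : HasDerivAt F (1 * E₀ s + (1 + s) * deriv E₀ s + c * deriv E₁ s) s :=
      (((hasDerivAt_id s).const_add 1).mul hE₀s).add (hE₁s.const_mul c)
    rw [hFs.deriv, one_mul]
  have hF_dissipation : ∀ s ∈ Set.Icc 0 t, deriv F s + (1 + s) * D₀ s ≤ 0 := by
    rintro s ⟨hs, -⟩
    have hweighted :=
      mul_nonpos_of_nonneg_of_nonpos (by linarith : (0 : ℝ) ≤ 1 + s) (hlayer₀ s hs)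
    have hscaled := mul_nonpos_of_nonneg_of_nonpos hc.le (hlayer₁ s hs)
    linarith [hF_deriv s, hE₀_le s hs]
  have hF_end : F t + ∫ τ in (0:ℝ)..t, (1 + τ) * D₀ τ ≤ F 0 :=
    add_integral_le_of_deriv_add_le_zero ht (by fun_prop) (by fun_prop) hF_dissipation
  simp only [F, add_zero, one_mul] at hF_end
  linarith [mul_nonneg hc.le (hE₁_nonneg t ht), mul_nonneg hc.le (hE₀_nonneg 0 le_rfl),
    hE₁_nonneg 0 le_rfl]
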